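/- arXiv:2507.20062 — 2 statements merged into one kernel-verified Lean document; each statement's English description precedes it below -/
import Mathlib

section
/- Let ∑_{n=0}^∞ a_n be a series of real numbers with a_0 ≤ 0, such that a_n > 0 for infinitely many n and a_n ≤ 0 for infinitely many n. Suppose there exists a type R λ-permutation σ_0 with bounded block number C_0 such that ∑_{n=0}^∞ a_{σ_0(n)} = r_0, and suppose the series satisfies ST_N. Then for every r ∈ ℝ there exist C ∈ ℕ and i_2 ∈ ℕ such that for all i > i_2, S_{q_i} + S_{[N_{i+1}, N_{i+C−1}]} < r, where q_i is the largest element of the i-th positive block P_i and S_{q_i} = Σ_{n=0}^{q_i} a_n. -/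
open Filter Finset

noncomputable section
open scoped Classical

/-- Partial sum of the series `∑ a n`: sum of the first `n` terms. -/
def partialSum (a : ℕ → ℝ) (n : ℕ) : ℝ := ∑ i ∈ Finset.range n, a i

/-- The series `∑ a n` converges to `L`. -/
def ConvergesTo (a : ℕ → ℝ) (L : ℝ) : Prop :=
  Filter.Tendsto (partialSum a) Filter.atTop (nhds L)

/-- The series `∑ a n` converges. -/
def Converges (a : ℕ → ℝ) : Prop := ∃ L : ℝ, ConvergesTo a L

/-- The series `∑ a n` is conditionally divergent: it diverges, but some
rearrangement of it converges. -/
def CondDivergent (a : ℕ → ℝ) : Prop :=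
  ¬ Converges a ∧ ∃ σ : Equiv.Perm ℕ, Converges (fun n => a (σ n))

/-- `σ` is a type R permutation of the series `∑ a n`: it preserves the relative
order of terms of the same sign. -/
def IsTypeR (a : ℕ → ℝ) (σ : Equiv.Perm ℕ) : Prop :=
  ∀ i j : ℕ, σ i < σ j →
    ((0 < a (σ i) ∧ 0 < a (σ j)) ∨ (a (σ i) ≤ 0 ∧ a (σ j) ≤ 0)) → i < j

/-- The number of maximal integer intervals whose union is the finite set `s`
(= the number of `x ∈ s` with `x + 1 ∉ s`). -/
def blockCount (s : Finset ℕ) : ℕ := (s.filter (fun x => x + 1 ∉ s)).card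

/-- `σ` has bounded block number `C`: at every stage `n`, the set
`σ '' {0, 1, …, n}` is a union of at most `C` maximal integer intervals. -/
def HasBBN (σ : Equiv.Perm ℕ) (C : ℕ) : Prop :=
  ∀ n : ℕ, blockCount ((Finset.range (n + 1)).image σ) ≤ C

/-- `σ` is a type R λ-permutation of the series `∑ a n`: a type R permutation
with bounded block number whose rearranged series converges. -/
def IsTypeRLambda (a : ℕ → ℝ) (σ : Equiv.Perm ℕ) : Prop :=
  IsTypeR a σ ∧ (∃ C : ℕ, HasBBN σ C) ∧ Converges (fun n => a (σ n))

/-- The set of sums attainable by type R λ-permutations of `∑ a n`. -/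
def ZR (a : ℕ → ℝ) : Set ℝ :=
  {r : ℝ | ∃ σ : Equiv.Perm ℕ, IsTypeRLambda a σ ∧ ConvergesTo (fun n => a (σ n)) r}

/-- The first element `p_i` of the `i`-th positive block `P_i` (blocks 1-indexed):
the `i`-th index `n` with `a n > 0` which starts a maximal interval of positive terms. -/
def posStartIdx (a : ℕ → ℝ) (i : ℕ) : ℕ :=
  Nat.nth (fun n => 0 < a n ∧ (n = 0 ∨ a (n - 1) ≤ 0)) (i - 1)

/-- The last element `q_i` of the `i`-th positive block `P_i` (blocks 1-indexed). -/
def posEndIdx (a : ℕ → ℝ) (i : ℕ) : ℕ :=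
  Nat.nth (fun n => 0 < a n ∧ a (n + 1) ≤ 0) (i - 1)

/-- The first element `n_i` of the `i`-th negative block `N_i` (blocks 1-indexed). -/
def negStartIdx (a : ℕ → ℝ) (i : ℕ) : ℕ :=
  Nat.nth (fun n => a n ≤ 0 ∧ (n = 0 ∨ 0 < a (n - 1))) (i - 1)

/-- The last element `m_i` of the `i`-th negative block `N_i` (blocks 1-indexed). -/
def negEndIdx (a : ℕ → ℝ) (i : ℕ) : ℕ :=
  Nat.nth (fun n => a n ≤ 0 ∧ 0 < a (n + 1)) (i - 1)

/-- `S_{[P_i, P_j]}`: the sum of the terms of `∑ a n` lying in the positive blocks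
`P_i ∪ ⋯ ∪ P_j` (interpreted as `0` when `j < i`). -/
def SP (a : ℕ → ℝ) (i j : ℕ) : ℝ :=
  if j < i then 0
  else ∑ n ∈ Finset.Icc (posStartIdx a i) (posEndIdx a j), if 0 < a n then a n else 0

/-- `S_{[N_i, N_j]}`: the sum of the terms of `∑ a n` lying in the negative blocks
`N_i ∪ ⋯ ∪ N_j` (interpreted as `0` when `j < i`). -/
def SN (a : ℕ → ℝ) (i j : ℕ) : ℝ :=
  if j < i then 0
  else ∑ n ∈ Finset.Icc (negStartIdx a i) (negEndIdx a j), if a n ≤ 0 then a n else 0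

/-- The substantial property on positive blocks. -/
def STP (a : ℕ → ℝ) : Prop :=
  ∃ k : ℕ, ∃ ε : ℝ, 0 < ε ∧ ∃ i0 : ℕ, ∀ i > i0, SP a i (i + k) ≥ ε

/-- The substantial property on negative blocks. -/
def STN (a : ℕ → ℝ) : Prop :=
  ∃ k : ℕ, ∃ ε : ℝ, 0 < ε ∧ ∃ i0 : ℕ, ∀ i > i0, SN a i (i + k) ≤ -ε


/-!
Let `q = q_i` and let `M` bound the partial sums of the rearranged series. Run `σ₀` up to the
first stage at which all of `0, …, q` have been used; the terms used so far form a set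
`A ⊇ {0, …, q}` with `∑_A a ≤ M`. As `σ₀` keeps the order of terms of each sign, all terms of
`A` beyond `q` have one sign. If they are positive, `S_q ≤ M`. If they are nonpositive, they form an
initial segment of `N_{i+1} ∪ N_{i+2} ∪ ⋯`, and since `A` is a union of at most `C₀` intervals this
segment stops within `N_{i+C₀}`, so `S_q + S_{[N_{i+1}, N_{i+C₀}]} ≤ M`. Appending `L + 1` groups
of `k + 1` further negative blocks, each of sum `≤ -ε` by `ST_N`, brings the sum below any `r`.
-/

open Nat (nth count)

theorem Nat.exists_boundary_between {P : ℕ → Prop} {x y : ℕ} (hx : P x) (hy : ¬ P y)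
    (hxy : x ≤ y) : ∃ t, x ≤ t ∧ t < y ∧ P t ∧ ¬ P (t + 1) := by
  induction y, hxy using Nat.le_induction with
  | base => exact absurd hx hy
  | succ y hxy ih =>
    by_cases hPy : P y
    · exact ⟨y, hxy, y.lt_succ_self, hPy, hy⟩
    · obtain ⟨t, hxt, hty, hPt, hPt'⟩ := ih hPy
      exact ⟨t, hxt, by omega, hPt, hPt'⟩

theorem Nat.nth_le_nth_of_interlaced {p q : ℕ → Prop} (hq : (Set.ofPred q).Infinite)
    (h₀ : ∀ y, q y → ∃ z ≤ y, p z)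
    (h : ∀ x y, q x → q y → x < y → ∃ z, x < z ∧ z ≤ y ∧ p z) (j : ℕ) :
    nth p j ≤ nth q j := by
  induction j with
  | zero =>
    obtain ⟨z, hz, hpz⟩ := h₀ _ (nth_mem_of_infinite hq 0)
    exact (Nat.nth_zero ▸ Nat.sInf_le hpz).trans hz
  | succ j ih =>
    obtain ⟨z, hjz, hz, hpz⟩ := h _ _ (nth_mem_of_infinite hq j) (nth_mem_of_infinite hq (j + 1))
      (nth_strictMono hq j.lt_succ_self)
    by_contra! hlt
    have := Nat.le_nth_of_lt_nth_succ (hz.trans_lt hlt) hpz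
    omega

theorem card_add_one_le_blockCount {A E : Finset ℕ} (hE : ∀ e ∈ E, e ∈ A ∧ e + 1 ∉ A)
    {x : ℕ} (hx : x ∈ A) (hEx : ∀ e ∈ E, e < x) : E.card + 1 ≤ blockCount A := by
  have hmax : A.max' ⟨x, hx⟩ ∉ E := fun h => (hEx _ h).not_ge (A.le_max' x hx)
  rw [← card_insert_of_notMem hmax]
  refine card_le_card (insert_subset (mem_filter.2 ⟨A.max'_mem _, fun h => ?_⟩)
    fun e he => mem_filter.2 (hE e he))
  exact (A.le_max' _ h).not_gt (Nat.lt_succ_self _)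

theorem HasBBN.one_le {σ : Equiv.Perm ℕ} {C : ℕ} (h : HasBBN σ C) : 1 ≤ C := by
  simpa [blockCount, Finset.filter_singleton] using h 0

theorem Equiv.Perm.mem_image_range_succ_iff (σ : Equiv.Perm ℕ) {n x : ℕ} :
    x ∈ (range (n + 1)).image σ ↔ σ.symm x ≤ n := by
  constructor
  · intro hx
    obtain ⟨j, hj, rfl⟩ := mem_image.1 hx
    simpa [Nat.lt_succ_iff] using hj
  · exact fun h => mem_image.2 ⟨σ.symm x, by simpa [Nat.lt_succ_iff] using h, by simp⟩

section Blocks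

variable {a : ℕ → ℝ}

-- The predicates enumerated by `posEndIdx`, `negStartIdx` and `negEndIdx`.
def IsPosEnd (a : ℕ → ℝ) (n : ℕ) : Prop := 0 < a n ∧ a (n + 1) ≤ 0

def IsNegStart (a : ℕ → ℝ) (n : ℕ) : Prop := a n ≤ 0 ∧ (n = 0 ∨ 0 < a (n - 1))

def IsNegEnd (a : ℕ → ℝ) (n : ℕ) : Prop := a n ≤ 0 ∧ 0 < a (n + 1)

theorem infinite_isPosEnd (hP : {n : ℕ | 0 < a n}.Infinite) (hN : {n : ℕ | a n ≤ 0}.Infinite) :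
    (Set.ofPred (IsPosEnd a)).Infinite := by
  refine Set.infinite_of_forall_exists_gt fun m => ?_
  obtain ⟨x, hx, hmx⟩ := hP.exists_gt m
  obtain ⟨y, hy, hxy⟩ := hN.exists_gt x
  obtain ⟨t, hxt, -, ht, ht'⟩ :=
    Nat.exists_boundary_between (P := fun n => 0 < a n) hx (not_lt.2 hy) hxy.le
  exact ⟨t, ⟨ht, not_lt.1 ht'⟩, by omega⟩

theorem infinite_isNegEnd (hP : {n : ℕ | 0 < a n}.Infinite) (hN : {n : ℕ | a n ≤ 0}.Infinite) :
    (Set.ofPred (IsNegEnd a)).Infinite := by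
  refine Set.infinite_of_forall_exists_gt fun m => ?_
  obtain ⟨x, hx, hmx⟩ := hN.exists_gt m
  obtain ⟨y, hy, hxy⟩ := hP.exists_gt x
  obtain ⟨t, hxt, -, ht, ht'⟩ :=
    Nat.exists_boundary_between (P := fun n => a n ≤ 0) hx (not_le.2 hy) hxy.le
  exact ⟨t, ⟨ht, not_le.1 ht'⟩, by omega⟩

theorem infinite_isNegStart (hP : {n : ℕ | 0 < a n}.Infinite) (hN : {n : ℕ | a n ≤ 0}.Infinite) :
    (Set.ofPred (IsNegStart a)).Infinite := by
  refine Set.infinite_of_forall_exists_gt fun m => ?_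
  obtain ⟨t, ht, hmt⟩ := (infinite_isPosEnd hP hN).exists_gt m
  exact ⟨t + 1, ⟨ht.2, Or.inr (by simpa using ht.1)⟩, by omega⟩

theorem negStartIdx_succ (h0 : a 0 ≤ 0) (hP : {n : ℕ | 0 < a n}.Infinite)
    (hN : {n : ℕ | a n ≤ 0}.Infinite) {i : ℕ} (hi : 1 ≤ i) :
    negStartIdx a (i + 1) = posEndIdx a i + 1 := by
  obtain ⟨j, rfl⟩ : ∃ j, i = j + 1 := ⟨i - 1, by omega⟩
  show nth (IsNegStart a) (j + 1) = nth (IsPosEnd a) j + 1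
  have hshift : (fun n => IsNegStart a (n + 1)) = IsPosEnd a := by
    funext n
    simp [IsNegStart, IsPosEnd, and_comm]
  have hcount : count (IsNegStart a) (nth (IsPosEnd a) j + 1) = j + 1 := by
    rw [Nat.count_succ', if_pos ⟨h0, Or.inl rfl⟩]
    simp only [hshift]
    rw [Nat.count_nth_of_infinite (infinite_isPosEnd hP hN)]
  have hmem : IsNegStart a (nth (IsPosEnd a) j + 1) := by
    simpa only [← hshift] using Nat.nth_mem_of_infinite (infinite_isPosEnd hP hN) j
  simpa [hcount] using Nat.nth_count hmem

theorem negStartIdx_le_negEndIdx (h0 : a 0 ≤ 0) (hP : {n : ℕ | 0 < a n}.Infinite)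
    (hN : {n : ℕ | a n ≤ 0}.Infinite) (i : ℕ) : negStartIdx a i ≤ negEndIdx a i := by
  refine Nat.nth_le_nth_of_interlaced (infinite_isNegEnd hP hN)
    (fun y _ => ⟨0, y.zero_le, h0, Or.inl rfl⟩) (fun x y hx hy hxy => ?_) (i - 1)
  obtain ⟨t, hxt, hty, ht, ht'⟩ :=
    Nat.exists_boundary_between (P := fun n => 0 < a n) hx.2 (not_lt.2 hy.1) hxy
  exact ⟨t + 1, by omega, hty, not_lt.1 ht', Or.inr (by simpa using ht)⟩

theorem negEndIdx_le_posEndIdx (h0 : a 0 ≤ 0) (hP : {n : ℕ | 0 < a n}.Infinite)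
    (hN : {n : ℕ | a n ≤ 0}.Infinite) (i : ℕ) : negEndIdx a i ≤ posEndIdx a i := by
  refine Nat.nth_le_nth_of_interlaced (infinite_isPosEnd hP hN) (fun y hy => ?_)
    (fun x y hx hy hxy => ?_) (i - 1)
  · obtain ⟨t, -, hty, ht, ht'⟩ :=
      Nat.exists_boundary_between (P := fun n => a n ≤ 0) h0 (not_le.2 hy.1) (Nat.zero_le y)
    exact ⟨t, hty.le, ht, not_le.1 ht'⟩
  · obtain ⟨t, hxt, hty, ht, ht'⟩ :=
      Nat.exists_boundary_between (P := fun n => a n ≤ 0) hx.2 (not_le.2 hy.1) hxy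
    exact ⟨t, by omega, hty.le, ht, not_le.1 ht'⟩

theorem negEndIdx_lt_negStartIdx_succ (h0 : a 0 ≤ 0) (hP : {n : ℕ | 0 < a n}.Infinite)
    (hN : {n : ℕ | a n ≤ 0}.Infinite) {i : ℕ} (hi : 1 ≤ i) :
    negEndIdx a i < negStartIdx a (i + 1) := by
  rw [negStartIdx_succ h0 hP hN hi]
  exact Nat.lt_succ_of_le (negEndIdx_le_posEndIdx h0 hP hN i)

theorem posEndIdx_lt_negEndIdx_succ (h0 : a 0 ≤ 0) (hP : {n : ℕ | 0 < a n}.Infinite)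
    (hN : {n : ℕ | a n ≤ 0}.Infinite) {i : ℕ} (hi : 1 ≤ i) :
    posEndIdx a i < negEndIdx a (i + 1) := by
  have := negStartIdx_le_negEndIdx h0 hP hN (i + 1)
  rw [negStartIdx_succ h0 hP hN hi] at this
  omega

theorem negStartIdx_mono (hP : {n : ℕ | 0 < a n}.Infinite) (hN : {n : ℕ | a n ≤ 0}.Infinite) :
    Monotone (negStartIdx a) :=
  (Nat.nth_monotone (infinite_isNegStart hP hN)).comp fun _ _ h => Nat.sub_le_sub_right h 1

theorem negEndIdx_mono (hP : {n : ℕ | 0 < a n}.Infinite) (hN : {n : ℕ | a n ≤ 0}.Infinite) :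
    Monotone (negEndIdx a) :=
  (Nat.nth_monotone (infinite_isNegEnd hP hN)).comp fun _ _ h => Nat.sub_le_sub_right h 1

theorem SN_nonpos (a : ℕ → ℝ) (i j : ℕ) : SN a i j ≤ 0 := by
  unfold SN
  split_ifs
  · exact le_rfl
  · exact sum_nonpos fun n _ => by split_ifs with h <;> linarith

theorem SN_le_add (h0 : a 0 ≤ 0) (hP : {n : ℕ | 0 < a n}.Infinite)
    (hN : {n : ℕ | a n ≤ 0}.Infinite) {α β γ : ℕ} (hα : 1 ≤ α) (hαβ : α ≤ β) (hβγ : β < γ) :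
    SN a α γ ≤ SN a α β + SN a (β + 1) γ := by
  have hgap := negEndIdx_lt_negStartIdx_succ h0 hP hN (hα.trans hαβ)
  unfold SN
  rw [if_neg (by omega), if_neg (by omega), if_neg (by omega),
    ← sum_union (disjoint_left.2 fun x h₁ h₂ => by simp only [mem_Icc] at h₁ h₂; omega)]
  refine sum_le_sum_of_subset_of_nonpos' (union_subset ?_ ?_) fun n _ _ => ?_
  · exact Icc_subset_Icc le_rfl (negEndIdx_mono hP hN hβγ.le)
  · exact Icc_subset_Icc (negStartIdx_mono hP hN (by omega)) le_rfl
  · split_ifs with h <;> linarith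

theorem SN_le_of_STN (h0 : a 0 ≤ 0) (hP : {n : ℕ | 0 < a n}.Infinite)
    (hN : {n : ℕ | a n ≤ 0}.Infinite) {k i0 : ℕ} {ε : ℝ}
    (hst : ∀ i > i0, SN a i (i + k) ≤ -ε) (L : ℕ) {j : ℕ} (hj : i0 < j) :
    SN a j (j + (L * (k + 1) + k)) ≤ -((L + 1) * ε) := by
  induction L generalizing j with
  | zero => simpa using hst j hj
  | succ L ih =>
    have hsplit := SN_le_add h0 hP hN (α := j) (β := j + k)
      (γ := j + ((L + 1) * (k + 1) + k)) (by omega) (by omega) (by nlinarith)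
    have htail := ih (j := j + k + 1) (by omega)
    rw [show j + k + 1 + (L * (k + 1) + k) = j + ((L + 1) * (k + 1) + k) by ring] at htail
    have hhead := hst j hj
    push_cast
    linarith

theorem le_negEndIdx_of_blockCount_le (h0 : a 0 ≤ 0)
    (hP : {n : ℕ | 0 < a n}.Infinite) (hN : {n : ℕ | a n ≤ 0}.Infinite)
    {A : Finset ℕ} {C i : ℕ} (hi : 1 ≤ i) (hA : blockCount A ≤ C)
    (habove : ∀ x ∈ A, posEndIdx a i < x → a x ≤ 0)
    (hdown : ∀ x ∈ A, ∀ y ≤ x, a y ≤ 0 → a x ≤ 0 → y ∈ A)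
    {x : ℕ} (hx : x ∈ A) (hqx : posEndIdx a i < x) : x ≤ negEndIdx a (i + C) := by
  by_contra! hlt
  set E := (range C).image fun t => negEndIdx a (i + 1 + t)
  have hE : ∀ e ∈ E, posEndIdx a i < e ∧ e < x ∧ IsNegEnd a e := by
    intro e he
    obtain ⟨t, ht, rfl⟩ := mem_image.1 he
    rw [mem_range] at ht
    exact ⟨(posEndIdx_lt_negEndIdx_succ h0 hP hN hi).trans_le (negEndIdx_mono hP hN (by omega)),
      (negEndIdx_mono hP hN (by omega)).trans_lt hlt,
      Nat.nth_mem_of_infinite (infinite_isNegEnd hP hN) _⟩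
  have hcard : E.card = C := by
    rw [card_image_of_injective _ fun s t hst => ?_, card_range]
    have := Nat.nth_injective (infinite_isNegEnd hP hN) hst
    omega
  -- `m_{i+1}, …, m_{i+C}` and `max A` all end maximal intervals of `A`
  have := card_add_one_le_blockCount (fun e he => ?_) hx fun e he => (hE e he).2.1
  · omega
  · obtain ⟨hqe, hex, hend⟩ := hE e he
    exact ⟨hdown x hx e hex.le hend.1 (habove x hx hqx),
      fun h => (habove _ h (by omega)).not_gt hend.2⟩

end Blocks

section TypeR

variable {a : ℕ → ℝ} {σ : Equiv.Perm ℕ}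

theorem IsTypeR.symm_lt_symm (hR : IsTypeR a σ) {x y : ℕ} (hxy : x < y)
    (hsign : (0 < a x ∧ 0 < a y) ∨ (a x ≤ 0 ∧ a y ≤ 0)) : σ.symm x < σ.symm y :=
  hR _ _ (by simpa using hxy) (by simpa using hsign)

theorem IsTypeR.mem_image_range_of_le (hR : IsTypeR a σ) {n x y : ℕ}
    (hx : x ∈ (range (n + 1)).image σ) (hyx : y ≤ x)
    (hsign : (0 < a y ∧ 0 < a x) ∨ (a y ≤ 0 ∧ a x ≤ 0)) : y ∈ (range (n + 1)).image σ := by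
  rcases hyx.eq_or_lt with rfl | hlt
  · exact hx
  · rw [σ.mem_image_range_succ_iff] at hx ⊢
    exact (hR.symm_lt_symm hlt hsign).le.trans hx

/-- At the first stage at which all of `0, …, q` have been used, the last term used lies in
`[0, q]`, while every other term used so far lies beyond `q` yet precedes it; by type R it then
has the opposite sign. -/
theorem IsTypeR.exists_stage (hR : IsTypeR a σ) (q : ℕ) :
    ∃ n, range (q + 1) ⊆ (range (n + 1)).image σ ∧
      ((∀ x ∈ (range (n + 1)).image σ, q < x → 0 < a x) ∨
        ∀ x ∈ (range (n + 1)).image σ, q < x → a x ≤ 0) := by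
  obtain ⟨t, ht, hsup⟩ := exists_mem_eq_sup (range (q + 1)) nonempty_range_add_one σ.symm
  refine ⟨σ.symm t, fun s hs => σ.mem_image_range_succ_iff.2 (hsup ▸ le_sup hs), ?_⟩
  have htq : t ≤ q := Nat.lt_succ_iff.1 (mem_range.1 ht)
  have hlate : ∀ x ∈ (range (σ.symm t + 1)).image σ, q < x →
      ¬ ((0 < a t ∧ 0 < a x) ∨ (a t ≤ 0 ∧ a x ≤ 0)) := fun x hx hqx hsign =>
    (σ.mem_image_range_succ_iff.1 hx).not_gt (hR.symm_lt_symm (by omega) hsign)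
  by_cases hat : 0 < a t
  · exact Or.inr fun x hx hqx => not_lt.1 fun hax => hlate x hx hqx (Or.inl ⟨hat, hax⟩)
  · exact Or.inl fun x hx hqx => not_le.1 fun hax => hlate x hx hqx (Or.inr ⟨not_lt.1 hat, hax⟩)

theorem partialSum_posEndIdx_add_SN_le (h0 : a 0 ≤ 0)
    (hP : {n : ℕ | 0 < a n}.Infinite) (hN : {n : ℕ | a n ≤ 0}.Infinite)
    {C : ℕ} {M : ℝ} (hR : IsTypeR a σ) (hB : HasBBN σ C)
    (hM : ∀ n, ∑ j ∈ range (n + 1), a (σ j) ≤ M) {i : ℕ} (hi : 1 ≤ i) :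
    partialSum a (posEndIdx a i + 1) + SN a (i + 1) (i + C) ≤ M := by
  set q := posEndIdx a i
  obtain ⟨n, hsub, hsign⟩ := hR.exists_stage q
  set A := (range (n + 1)).image σ
  have hA : ∑ x ∈ A, a x ≤ M := by
    rw [sum_image σ.injective.injOn]
    exact hM n
  have hsplit := sum_sdiff (f := a) hsub
  have hbeyond : ∀ x ∈ A \ range (q + 1), x ∈ A ∧ q < x := fun x hx => by
    obtain ⟨hxA, hxq⟩ := mem_sdiff.1 hx
    exact ⟨hxA, by simpa using hxq⟩
  suffices SN a (i + 1) (i + C) ≤ ∑ x ∈ A \ range (q + 1), a x by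
    unfold partialSum
    linarith
  rcases hsign with hpos | hnonpos
  · exact (SN_nonpos a _ _).trans
      (sum_nonneg fun x hx => (hpos x (hbeyond x hx).1 (hbeyond x hx).2).le)
  · have hend : ∀ x ∈ A \ range (q + 1), x ≤ negEndIdx a (i + C) := fun x hx =>
      le_negEndIdx_of_blockCount_le h0 hP hN hi (hB n) hnonpos
        (fun x hx y hyx hy hx' => hR.mem_image_range_of_le hx hyx (Or.inr ⟨hy, hx'⟩))
        (hbeyond x hx).1 (hbeyond x hx).2
    unfold SN
    rw [if_neg (by have := hB.one_le; omega), negStartIdx_succ h0 hP hN hi]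
    calc _ ≤ ∑ x ∈ A \ range (q + 1), if a x ≤ 0 then a x else 0 :=
          sum_le_sum_of_subset_of_nonpos'
            (fun x hx => mem_Icc.2 ⟨(hbeyond x hx).2, hend x hx⟩)
            fun x _ _ => by split_ifs with h <;> linarith
      _ = ∑ x ∈ A \ range (q + 1), a x :=
          sum_congr rfl fun x hx => if_pos (hnonpos x (hbeyond x hx).1 (hbeyond x hx).2)

end TypeR

/-- If the series (with `a 0 ≤ 0`, infinitely many positive and
nonpositive terms) admits a type R λ-permutation `σ₀` with bounded block number
`C₀` rearranging it to `r₀`, and satisfies `ST_N`, then for every `r` there are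
`C, i₂` with `S_{q_i} + S_{[N_{i+1},N_{i+C−1}]} < r` for all `i > i₂`, where
`q_i` is the largest element of the positive block `P_i`. -/
theorem statement9 (a : ℕ → ℝ) (h0 : a 0 ≤ 0)
    (hP : {n : ℕ | 0 < a n}.Infinite) (hN : {n : ℕ | a n ≤ 0}.Infinite)
    (σ₀ : Equiv.Perm ℕ) (C₀ : ℕ) (r₀ : ℝ)
    (hR : IsTypeR a σ₀) (hB : HasBBN σ₀ C₀)
    (hr₀ : ConvergesTo (fun n => a (σ₀ n)) r₀)
    (hstn : STN a) :
    ∀ r : ℝ, ∃ C : ℕ, ∃ i₂ : ℕ, ∀ i > i₂,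
      partialSum a (posEndIdx a i + 1) + SN a (i + 1) (i + C - 1) < r := by
  intro r
  obtain ⟨k, ε, hε, i0, hst⟩ := hstn
  obtain ⟨M, hM⟩ : ∃ M, ∀ n, ∑ j ∈ range (n + 1), a (σ₀ j) ≤ M := by
    obtain ⟨M, hM⟩ := hr₀.bddAbove_range
    exact ⟨M, fun n => hM (Set.mem_range_self (n + 1))⟩
  obtain ⟨L, hL⟩ := exists_nat_gt ((M - r) / ε)
  rw [div_lt_iff₀ hε] at hL
  refine ⟨C₀ + (L * (k + 1) + k) + 2, i0, fun i hi => ?_⟩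
  have hhead := partialSum_posEndIdx_add_SN_le h0 hP hN hR hB hM (i := i) (by omega)
  have hsplit := SN_le_add h0 hP hN (α := i + 1) (β := i + C₀)
    (γ := i + C₀ + 1 + (L * (k + 1) + k)) (by omega) (by have := hB.one_le; omega) (by omega)
  have htail := SN_le_of_STN h0 hP hN hst L (j := i + C₀ + 1) (by omega)
  rw [show i + (C₀ + (L * (k + 1) + k) + 2) - 1 = i + C₀ + 1 + (L * (k + 1) + k) by omega]
  linarith
end
end

section
/- Let ∑_{n=0}^∞ a_n be a series of real numbers with a_0 ≤ 0, such that a_n > 0 for infinitely many n and a_n ≤ 0 for infinitely many n, and suppose the series has at least two distinct type R λ-permutation sums (i.e., there exist type R λ-permutations σ_1, σ_2 with ∑ a_{σ_1(n)} ≠ ∑ a_{σ_2(n)}). Then the series satisfies both ST_P and ST_N. -/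
open Filter Finset

noncomputable section
open scoped Classical

/-!
Let `s` be the set of positive indices. A type R permutation takes the elements of `s`, and those
of its complement, in increasing order, so each of its stages consists of the elements of `s`
below some `x` together with those of `sᶜ` below some `w`; its partial sum is then the sum of the
terms of `s` below `x` plus the sum of the terms of `sᶜ` below `w`. If the block number is at most
`C`, then `x` and `w` lie within `C` runs of `s` of each other. Stop two such permutations at the
stages where they have used exactly the nonpositive terms below the start of the `(l + C)`-th
positive run: the two partial sums differ by at most the sum of `2C + 1` consecutive positive
blocks. Without `ST_P` this is frequently as small as we like, so the two sums coincide. The same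
argument with the roles of `s` and `sᶜ` exchanged gives `ST_N`.
-/

open Equiv

section Runs

variable {s : Set ℕ}

def IsRunStart (s : Set ℕ) (t : ℕ) : Prop := t ∈ s ∧ (t = 0 ∨ t - 1 ∉ s)

def IsRunEnd (s : Set ℕ) (t : ℕ) : Prop := t ∈ s ∧ t + 1 ∉ s

/-- Runs are indexed from `0`: the `i`-th maximal run of `s` is `[runStart s i, runEnd s i]`. -/
def runStart (s : Set ℕ) (i : ℕ) : ℕ := Nat.nth (IsRunStart s) i

def runEnd (s : Set ℕ) (i : ℕ) : ℕ := Nat.nth (IsRunEnd s) i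

lemma exists_isRunEnd_mem_Ico {m m' : ℕ} (hm : m ∈ s) (hm' : m' ∉ s) (h : m ≤ m') :
    ∃ t ∈ Ico m m', IsRunEnd s t := by
  have hex : ∃ k, m + k ∉ s := ⟨m' - m, by rwa [Nat.add_sub_cancel' h]⟩
  have hk : Nat.find hex ≠ 0 := fun hk => Nat.find_spec hex (by rwa [hk])
  have hkm : Nat.find hex ≤ m' - m := Nat.find_min' hex (by rwa [Nat.add_sub_cancel' h])
  refine ⟨m + Nat.find hex - 1, mem_Ico.mpr ⟨by omega, by omega⟩, ?_, ?_⟩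
  · have := Nat.find_min hex (show Nat.find hex - 1 < Nat.find hex by omega)
    rwa [not_not, ← Nat.add_sub_assoc (Nat.one_le_iff_ne_zero.mpr hk)] at this
  · rw [Nat.sub_add_cancel (by omega)]
    exact Nat.find_spec hex

lemma infinite_setOf_isRunEnd (hs : s.Infinite) (hsc : sᶜ.Infinite) :
    {t | IsRunEnd s t}.Infinite := by
  refine Set.infinite_of_forall_exists_gt fun N => ?_
  obtain ⟨m, hm, hNm⟩ := hs.exists_gt N
  obtain ⟨m', hm', hmm'⟩ := hsc.exists_gt m
  obtain ⟨t, ht, hend⟩ := exists_isRunEnd_mem_Ico hm hm' hmm'.le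
  exact ⟨t, hend, by rw [mem_Ico] at ht; omega⟩

lemma infinite_setOf_isRunStart (hs : s.Infinite) (hsc : sᶜ.Infinite) :
    {t | IsRunStart s t}.Infinite := by
  refine Set.infinite_of_forall_exists_gt fun N => ?_
  obtain ⟨u, ⟨hu, hu1⟩, hNu⟩ :=
    (infinite_setOf_isRunEnd hsc (by rwa [compl_compl])).exists_gt N
  exact ⟨u + 1, ⟨not_not.mp hu1, Or.inr (by simpa using hu)⟩, by omega⟩

lemma runStart_strictMono (h : {t | IsRunStart s t}.Infinite) : StrictMono (runStart s) :=
  Nat.nth_strictMono h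

lemma runEnd_strictMono (h : {t | IsRunEnd s t}.Infinite) : StrictMono (runEnd s) :=
  Nat.nth_strictMono h

lemma isRunStart_runStart (h : {t | IsRunStart s t}.Infinite) (i : ℕ) :
    IsRunStart s (runStart s i) :=
  Nat.nth_mem_of_infinite h i

lemma isRunEnd_runEnd (h : {t | IsRunEnd s t}.Infinite) (i : ℕ) : IsRunEnd s (runEnd s i) :=
  Nat.nth_mem_of_infinite h i

-- A run that has started by `n` has ended before `n` unless it contains `n`.
lemma count_isRunStart_succ (n : ℕ) :
    Nat.count (IsRunStart s) (n + 1) = Nat.count (IsRunEnd s) n + if n ∈ s then 1 else 0 := by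
  induction n with
  | zero => simp [Nat.count_succ, IsRunStart]
  | succ n ih =>
    rw [Nat.count_succ, ih, Nat.count_succ]
    by_cases h : n ∈ s <;> by_cases h' : n + 1 ∈ s <;> simp [IsRunStart, IsRunEnd, h, h']

lemma runStart_le_runEnd (h : {t | IsRunEnd s t}.Infinite) (i : ℕ) : runStart s i ≤ runEnd s i := by
  have hcount : Nat.count (IsRunEnd s) (runEnd s i) = i := Nat.count_nth_of_infinite h i
  refine Nat.lt_succ_iff.mp (Nat.nth_lt_of_lt_count ?_)
  rw [count_isRunStart_succ, hcount, if_pos (isRunEnd_runEnd h i).1]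
  exact Nat.lt_succ_self i

end Runs

section Stages

variable {s : Set ℕ} {σ : Perm ℕ}

/-- `IsTypeR` with the sign classes replaced by `s` and `sᶜ`. -/
def IsTypeROn (s : Set ℕ) (σ : Perm ℕ) : Prop :=
  ∀ i j, σ i < σ j → (σ i ∈ s ↔ σ j ∈ s) → i < j

lemma IsTypeR.isTypeROn {a : ℕ → ℝ} (h : IsTypeR a σ) : IsTypeROn {n | 0 < a n} σ := by
  intro i j hij hs
  refine h i j hij ?_
  by_cases hi : 0 < a (σ i)
  · exact Or.inl ⟨hi, hs.mp hi⟩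
  · exact Or.inr ⟨not_lt.mp hi, not_lt.mp (mt hs.mpr hi)⟩

lemma isTypeROn_compl : IsTypeROn sᶜ σ ↔ IsTypeROn s σ := by
  simp only [IsTypeROn, Set.mem_compl_iff, not_iff_not]

lemma IsTypeROn.symm_le_symm_iff (h : IsTypeROn s σ) {u v : ℕ} (huv : u ∈ s ↔ v ∈ s) :
    σ.symm u ≤ σ.symm v ↔ u ≤ v := by
  constructor
  · intro hle
    by_contra hlt
    have := h (σ.symm v) (σ.symm u) (by simpa using not_le.mp hlt) (by simpa using huv.symm)
    omega
  · intro hle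
    rcases hle.eq_or_lt with rfl | hlt
    · rfl
    · exact (h _ _ (by simpa using hlt) (by simpa using huv)).le

def stage (σ : Perm ℕ) (n : ℕ) : Finset ℕ := (range (n + 1)).image σ

lemma mem_stage {n m : ℕ} : m ∈ stage σ n ↔ σ.symm m ≤ n := by
  simp only [stage, mem_image, mem_range, Nat.lt_succ_iff]
  constructor
  · rintro ⟨k, hk, rfl⟩
    simpa using hk
  · exact fun h => ⟨σ.symm m, h, σ.apply_symm_apply m⟩

lemma partialSum_succ_eq_sum_stage (a : ℕ → ℝ) (n : ℕ) :
    partialSum (fun k => a (σ k)) (n + 1) = ∑ m ∈ stage σ n, a m := by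
  rw [partialSum, stage, sum_image fun _ _ _ _ h => σ.injective h]

lemma IsTypeROn.mem_stage_symm_iff (h : IsTypeROn s σ) {m w : ℕ} (hm : m ∈ s ↔ w ∈ s) :
    m ∈ stage σ (σ.symm w) ↔ m ≤ w := by
  rw [mem_stage, h.symm_le_symm_iff hm]

lemma IsTypeROn.exists_forall_mem_stage_iff_lt (h : IsTypeROn s σ) (hs : s.Infinite) (n : ℕ) :
    ∃ x, ∀ m ∈ s, m ∈ stage σ n ↔ m < x := by
  have hex : ∃ x, x ∈ s ∧ x ∉ stage σ n := hs.exists_notMem_finset _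
  obtain ⟨hxs, hxS⟩ := Nat.find_spec hex
  refine ⟨Nat.find hex, fun m hm => ⟨fun hmS => ?_, fun hlt => ?_⟩⟩
  · by_contra hge
    have hle := (h.symm_le_symm_iff (iff_of_true hxs hm)).mpr (not_lt.mp hge)
    exact hxS (mem_stage.mpr (hle.trans (mem_stage.mp hmS)))
  · by_contra hmS
    exact Nat.find_min hex hlt ⟨hm, hmS⟩

end Stages

section BlockCount

variable {s : Set ℕ} {S : Finset ℕ} {x w C : ℕ}

lemma le_blockCount {f : ℕ → ℕ} (hf : StrictMono f) {k : ℕ} (h : ∀ i < k, f i ∈ S ∧ f i + 1 ∉ S) :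
    k ≤ blockCount S :=
  calc k = #((range k).image f) := by rw [card_image_of_injective _ hf.injective, card_range]
    _ ≤ blockCount S := card_le_card fun v hv => by
        obtain ⟨i, hi, rfl⟩ := mem_image.mp hv
        exact mem_filter.mpr (h i (mem_range.mp hi))

-- If `x` were that small, the `C + 1` points just before the runs `l, …, l + C` would all end blocks.
lemma runStart_lt_of_blockCount_le (hS : blockCount S ≤ C) (hx : ∀ m ∈ s, m ∈ S ↔ m < x)
    (hw : ∀ m ∉ s, m ∈ S ↔ m < w) (hstarts : {t | IsRunStart s t}.Infinite) {l : ℕ} (hl : 0 < l)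
    (hlw : runStart s (l + C) ≤ w) : runStart s l < x := by
  by_contra hxl
  have hmono := runStart_strictMono hstarts
  have hpos : ∀ i, 0 < runStart s (l + i) := fun i =>
    (Nat.zero_le _).trans_lt (hmono (show 0 < l + i by omega))
  have hblocks := le_blockCount (S := S) (k := C + 1) (f := fun i => runStart s (l + i) - 1)
    (fun i j hij => by
      have := hmono (show l + i < l + j by omega)
      have := hpos i
      dsimp only
      omega)
    fun i hi => by
      show runStart s (l + i) - 1 ∈ S ∧ runStart s (l + i) - 1 + 1 ∉ S
      have hrun := isRunStart_runStart hstarts (l + i)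
      have hposi := hpos i
      have hle : runStart s (l + i) ≤ runStart s (l + C) := hmono.monotone (by omega)
      have hge : runStart s l ≤ runStart s (l + i) := hmono.monotone (by omega)
      refine ⟨(hw _ (hrun.2.resolve_left hposi.ne')).mpr (by omega), ?_⟩
      rw [Nat.sub_add_cancel hposi]
      exact fun hmS => absurd ((hx _ hrun.1).mp hmS) (by omega)
  omega

-- If `x` were that large, the ends of the runs `j, …, j + C` would all end blocks.
lemma le_runEnd_of_blockCount_le (hS : blockCount S ≤ C) (hx : ∀ m ∈ s, m ∈ S ↔ m < x)
    (hw : ∀ m ∉ s, m ∈ S ↔ m < w) (hends : {t | IsRunEnd s t}.Infinite) {j : ℕ}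
    (hwj : w ≤ runEnd s j + 1) : x ≤ runEnd s (j + C) := by
  by_contra hxj
  have hmono := runEnd_strictMono hends
  have hblocks := le_blockCount (S := S) (k := C + 1) (f := fun i => runEnd s (j + i))
    (fun i i' hii' => hmono (by omega))
    fun i hi => by
      have hrun := isRunEnd_runEnd hends (j + i)
      have hge : runEnd s j ≤ runEnd s (j + i) := hmono.monotone (by omega)
      have hle : runEnd s (j + i) ≤ runEnd s (j + C) := hmono.monotone (by omega)
      exact ⟨(hx _ hrun.1).mpr (by omega), fun h => absurd ((hw _ hrun.2).mp h) (by omega)⟩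
  omega

end BlockCount

section Sums

variable {s : Set ℕ}

lemma sum_eq_sum_range_indicator_add {S : Finset ℕ} {x w : ℕ} (a : ℕ → ℝ)
    (hx : ∀ m ∈ s, m ∈ S ↔ m < x) (hw : ∀ m ∉ s, m ∈ S ↔ m < w) :
    ∑ m ∈ S, a m = ∑ m ∈ range x, s.indicator a m + ∑ m ∈ range w, sᶜ.indicator a m := by
  have hpart : ∀ (t : Set ℕ) (y : ℕ), (∀ m ∈ t, m ∈ S ↔ m < y) →
      ∑ m ∈ S, t.indicator a m = ∑ m ∈ range y, t.indicator a m := by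
    intro t y h
    simp only [Set.indicator_apply, ← sum_filter]
    congr 1
    ext m
    simp only [mem_filter, mem_range]
    exact ⟨fun hm => ⟨(h m hm.2).mp hm.1, hm.2⟩, fun hm => ⟨(h m hm.2).mpr hm.1, hm.2⟩⟩
  rw [← hpart s x hx, ← hpart sᶜ w hw, ← sum_add_distrib]
  simp only [Set.indicator_self_add_compl_apply]

lemma abs_sum_range_sub_sum_range_le (g : ℕ → ℝ) {u v x y : ℕ} (hx : x ∈ Ioc u v)
    (hy : y ∈ Ioc u v) :
    |∑ m ∈ range x, g m - ∑ m ∈ range y, g m| ≤ ∑ m ∈ Icc u v, |g m| := by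
  wlog hyx : y ≤ x generalizing x y
  · rw [abs_sub_comm]
    exact this hy hx (le_of_not_ge hyx)
  rw [← sum_Ico_eq_sub _ hyx]
  refine (abs_sum_le_sum_abs _ _).trans
    (sum_le_sum_of_subset_of_nonneg (fun m hm => ?_) fun _ _ _ => abs_nonneg _)
  rw [mem_Ioc] at hx hy
  rw [mem_Ico] at hm
  exact mem_Icc.mpr ⟨by omega, by omega⟩

end Sums

section Uniqueness

variable {s : Set ℕ} {σ : Perm ℕ} {C : ℕ}

lemma IsTypeROn.exists_partialSum_eq (hσ : IsTypeROn s σ) (hB : HasBBN σ C) (hs : s.Infinite)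
    (hsc : sᶜ.Infinite) (a : ℕ → ℝ) {l : ℕ} (hl : 0 < l) :
    ∃ x ∈ Ioc (runStart s l) (runEnd s (l + 2 * C)),
      partialSum (fun k => a (σ k)) (σ.symm (runStart s (l + C) - 1) + 1) =
        ∑ m ∈ range x, s.indicator a m + ∑ m ∈ range (runStart s (l + C)), sᶜ.indicator a m := by
  set w := runStart s (l + C)
  have hstarts := infinite_setOf_isRunStart hs hsc
  have hends := infinite_setOf_isRunEnd hs hsc
  have hw0 : 0 < w := (Nat.zero_le _).trans_lt (runStart_strictMono hstarts (by omega : 0 < l + C))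
  have hw1 : w - 1 ∉ s := (isRunStart_runStart hstarts _).2.resolve_left hw0.ne'
  have hwS : ∀ m ∉ s, m ∈ stage σ (σ.symm (w - 1)) ↔ m < w := fun m hm => by
    rw [hσ.mem_stage_symm_iff (iff_of_false hm hw1)]
    omega
  obtain ⟨x, hxS⟩ := hσ.exists_forall_mem_stage_iff_lt hs (σ.symm (w - 1))
  have hBn : blockCount (stage σ (σ.symm (w - 1))) ≤ C := hB _
  refine ⟨x, mem_Ioc.mpr ⟨runStart_lt_of_blockCount_le hBn hxS hwS hstarts hl le_rfl, ?_⟩, ?_⟩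
  · have := le_runEnd_of_blockCount_le hBn hxS hwS hends
      ((runStart_le_runEnd hends (l + C)).trans (Nat.le_succ _))
    rwa [show l + C + C = l + 2 * C by ring] at this
  · rw [partialSum_succ_eq_sum_stage, sum_eq_sum_range_indicator_add a hxS hwS]

lemma tendsto_partialSum_symm {a : ℕ → ℝ} {r : ℝ} (hr : ConvergesTo (fun k => a (σ k)) r)
    {g : ℕ → ℕ} (hg : Tendsto g atTop atTop) :
    Tendsto (fun l => partialSum (fun k => a (σ k)) (σ.symm (g l) + 1)) atTop (nhds r) :=
  hr.comp ((tendsto_add_atTop_nat 1).comp (σ.symm.injective.nat_tendsto_atTop.comp hg))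

theorem eq_of_frequently_sum_runs_lt {a : ℕ → ℝ} {σ₁ σ₂ : Perm ℕ} {r₁ r₂ : ℝ}
    (hs : s.Infinite) (hsc : sᶜ.Infinite) (hσ₁ : IsTypeROn s σ₁) (hσ₂ : IsTypeROn s σ₂)
    (hB₁ : HasBBN σ₁ C) (hB₂ : HasBBN σ₂ C)
    (hr₁ : ConvergesTo (fun n => a (σ₁ n)) r₁) (hr₂ : ConvergesTo (fun n => a (σ₂ n)) r₂)
    (hsmall : ∀ ε > 0, ∃ᶠ l in atTop,
      ∑ m ∈ Icc (runStart s l) (runEnd s (l + 2 * C)), |s.indicator a m| < ε) :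
    r₁ = r₂ := by
  set g := fun l => runStart s (l + C) - 1
  have hg : Tendsto g atTop atTop := (tendsto_sub_atTop_nat 1).comp
    ((runStart_strictMono (infinite_setOf_isRunStart hs hsc)).tendsto_atTop.comp
      (tendsto_add_atTop_nat C))
  set f₁ := fun l => partialSum (fun k => a (σ₁ k)) (σ₁.symm (g l) + 1)
  set f₂ := fun l => partialSum (fun k => a (σ₂ k)) (σ₂.symm (g l) + 1)
  have hclose : ∀ l > 0,
      |f₁ l - f₂ l| ≤ ∑ m ∈ Icc (runStart s l) (runEnd s (l + 2 * C)), |s.indicator a m| := by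
    intro l hl
    obtain ⟨x₁, hx₁, h₁⟩ := hσ₁.exists_partialSum_eq hB₁ hs hsc a hl
    obtain ⟨x₂, hx₂, h₂⟩ := hσ₂.exists_partialSum_eq hB₂ hs hsc a hl
    simp only [f₁, f₂, g, h₁, h₂, add_sub_add_right_eq_sub]
    exact abs_sum_range_sub_sum_range_le _ hx₁ hx₂
  by_contra hne
  have hd : 0 < |r₁ - r₂| / 2 := half_pos (abs_pos.mpr (sub_ne_zero.mpr hne))
  have hfar : ∀ᶠ l in atTop, |r₁ - r₂| / 2 < |f₁ l - f₂ l| :=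
    (((tendsto_partialSum_symm hr₁ hg).sub (tendsto_partialSum_symm hr₂ hg)).abs).eventually_const_lt
      (half_lt_self (abs_pos.mpr (sub_ne_zero.mpr hne)))
  obtain ⟨l, hlsmall, hl, hlfar⟩ :=
    ((hsmall _ hd).and_eventually ((eventually_gt_atTop 0).and hfar)).exists
  linarith [hclose l hl]

end Uniqueness

section Blocks

variable {a : ℕ → ℝ}

lemma SP_eq_sum_runs (l k : ℕ) :
    SP a (l + 1) (l + 1 + k) = ∑ m ∈ Icc (runStart {n | 0 < a n} l)
      (runEnd {n | 0 < a n} (l + k)), |{n | 0 < a n}.indicator a m| := by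
  have hstart : IsRunStart {n | 0 < a n} = fun n => 0 < a n ∧ (n = 0 ∨ a (n - 1) ≤ 0) := by
    ext n
    simp [IsRunStart]
  have hend : IsRunEnd {n | 0 < a n} = fun n => 0 < a n ∧ a (n + 1) ≤ 0 := by
    ext n
    simp [IsRunEnd]
  rw [SP, if_neg (by omega), posStartIdx, posEndIdx, runStart, runEnd, hstart, hend,
    Nat.add_sub_cancel, show l + 1 + k - 1 = l + k by omega]
  refine sum_congr rfl fun m _ => ?_
  by_cases h : 0 < a m <;> simp [h, abs_of_pos]

lemma SN_eq_neg_sum_runs (l k : ℕ) :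
    SN a (l + 1) (l + 1 + k) = -∑ m ∈ Icc (runStart {n | 0 < a n}ᶜ l)
      (runEnd {n | 0 < a n}ᶜ (l + k)), |{n | 0 < a n}ᶜ.indicator a m| := by
  have hstart : IsRunStart {n | 0 < a n}ᶜ = fun n => a n ≤ 0 ∧ (n = 0 ∨ 0 < a (n - 1)) := by
    ext n
    simp [IsRunStart]
  have hend : IsRunEnd {n | 0 < a n}ᶜ = fun n => a n ≤ 0 ∧ 0 < a (n + 1) := by
    ext n
    simp [IsRunEnd]
  rw [SN, if_neg (by omega), negStartIdx, negEndIdx, runStart, runEnd, hstart, hend,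
    Nat.add_sub_cancel, show l + 1 + k - 1 = l + k by omega, ← sum_neg_distrib]
  refine sum_congr rfl fun m _ => ?_
  by_cases h : a m ≤ 0 <;> simp [h, abs_of_nonpos]

lemma frequently_sum_runs_lt_of_not_STP (h : ¬ STP a) (k : ℕ) {ε : ℝ} (hε : 0 < ε) :
    ∃ᶠ l in atTop, ∑ m ∈ Icc (runStart {n | 0 < a n} l)
      (runEnd {n | 0 < a n} (l + k)), |{n | 0 < a n}.indicator a m| < ε := by
  simp only [STP, not_exists, not_and, not_forall, not_le] at h
  refine frequently_atTop.mpr fun L => ?_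
  obtain ⟨i, hi, hSP⟩ := h k ε hε L
  refine ⟨i - 1, by omega, ?_⟩
  rwa [← SP_eq_sum_runs, show i - 1 + 1 = i by omega]

lemma frequently_sum_runs_lt_of_not_STN (h : ¬ STN a) (k : ℕ) {ε : ℝ} (hε : 0 < ε) :
    ∃ᶠ l in atTop, ∑ m ∈ Icc (runStart {n | 0 < a n}ᶜ l)
      (runEnd {n | 0 < a n}ᶜ (l + k)), |{n | 0 < a n}ᶜ.indicator a m| < ε := by
  simp only [STN, not_exists, not_and, not_forall, not_le] at h
  refine frequently_atTop.mpr fun L => ?_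
  obtain ⟨i, hi, hSN⟩ := h k ε hε L
  refine ⟨i - 1, by omega, ?_⟩
  rw [← neg_lt_neg_iff, ← SN_eq_neg_sum_runs, show i - 1 + 1 = i by omega]
  exact hSN

end Blocks

theorem statement11_general (a : ℕ → ℝ)
    (hP : {n : ℕ | 0 < a n}.Infinite) (hN : {n : ℕ | a n ≤ 0}.Infinite)
    (σ₁ σ₂ : Equiv.Perm ℕ) (r₁ r₂ : ℝ)
    (h₁ : IsTypeRLambda a σ₁) (h₂ : IsTypeRLambda a σ₂)
    (hr₁ : ConvergesTo (fun n => a (σ₁ n)) r₁)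
    (hr₂ : ConvergesTo (fun n => a (σ₂ n)) r₂)
    (hne : r₁ ≠ r₂) :
    STP a ∧ STN a := by
  obtain ⟨hR₁, ⟨C₁, hB₁⟩, -⟩ := h₁
  obtain ⟨hR₂, ⟨C₂, hB₂⟩, -⟩ := h₂
  have hB₁' : HasBBN σ₁ (max C₁ C₂) := fun n => (hB₁ n).trans (le_max_left _ _)
  have hB₂' : HasBBN σ₂ (max C₁ C₂) := fun n => (hB₂ n).trans (le_max_right _ _)
  have hPc : {n : ℕ | 0 < a n}ᶜ.Infinite := by simpa [Set.compl_ofPred] using hN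
  constructor
  · by_contra hSTP
    exact hne (eq_of_frequently_sum_runs_lt hP hPc hR₁.isTypeROn hR₂.isTypeROn hB₁' hB₂' hr₁ hr₂
      fun ε hε => frequently_sum_runs_lt_of_not_STP hSTP _ hε)
  · by_contra hSTN
    exact hne (eq_of_frequently_sum_runs_lt hPc (by rwa [compl_compl])
      (isTypeROn_compl.mpr hR₁.isTypeROn) (isTypeROn_compl.mpr hR₂.isTypeROn) hB₁' hB₂' hr₁ hr₂
      fun ε hε => frequently_sum_runs_lt_of_not_STN hSTN _ hε)

/-- If a series (with `a 0 ≤ 0`, infinitely many positive and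
nonpositive terms) has two type R λ-permutations with distinct sums, then it
satisfies both `ST_P` and `ST_N`. -/
theorem statement11 (a : ℕ → ℝ) (h0 : a 0 ≤ 0)
    (hP : {n : ℕ | 0 < a n}.Infinite) (hN : {n : ℕ | a n ≤ 0}.Infinite)
    (σ₁ σ₂ : Equiv.Perm ℕ) (r₁ r₂ : ℝ)
    (h₁ : IsTypeRLambda a σ₁) (h₂ : IsTypeRLambda a σ₂)
    (hr₁ : ConvergesTo (fun n => a (σ₁ n)) r₁)
    (hr₂ : ConvergesTo (fun n => a (σ₂ n)) r₂)
    (hne : r₁ ≠ r₂) :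
    STP a ∧ STN a :=
  statement11_general a hP hN σ₁ σ₂ r₁ r₂ h₁ h₂ hr₁ hr₂ hne
end
end
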